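/- arXiv:2202.11895 — 2 statements merged into one kernel-verified Lean document; each statement's English description precedes it below -/
import Mathlib

section
/- Under the setup of the paper, the upper bound always satisfies τ̄(P) ≥ 0: with τ̄(P) = 4·E[min(F(X),G(Y)) | Z=1]·P(Z=1) + 4·E[F(X) | Z=2]·P(Z=2) + 4·E[G(Y) | Z=3]·P(Z=3) + 4·P(Z=4) − 1, one has τ̄(P) ≥ 0 whenever F(X) and G(Y) are uniformly distributed on [0,1]. -/
/-!
The function `m(u, v) = min u (1/2) + min v (1/2) - 1/2` lies below `min u v`, hence below `u`
and `v`, and below `1`. Being a sum of functions of one variable, it has the same expectation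
`2 · 3/8 - 1/2 = 1/4` under every coupling of two uniform variables; it is the dual certificate
showing that the countermonotonic coupling, with `E[min(U, 1 - U)] = 1/4`, minimises `E[min(U, V)]`.
Bounding each of the four terms of `τ̄(P)` below by `4 ∫_{Z = z} m(F(X), G(Y))` and summing over
`z` gives `τ̄(P) ≥ 4 · 1/4 - 1 = 0`.
-/

open MeasureTheory Set

section MapEq

variable {Ω α : Type*} [MeasurableSpace Ω] [MeasurableSpace α] {P : Measure Ω} {W : Ω → α}
  {μ : Measure α}

theorem integrable_comp_of_map_eq (hW : P.map W = μ) (hμ : μ ≠ 0) {f : α → ℝ}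
    (hf : Integrable f μ) : Integrable (fun ω => f (W ω)) P := by
  subst hW
  exact (integrable_map_measure hf.aestronglyMeasurable (AEMeasurable.of_map_ne_zero hμ)).1 hf

theorem integral_comp_of_map_eq (hW : P.map W = μ) (hμ : μ ≠ 0) {f : α → ℝ}
    (hf : AEStronglyMeasurable f μ) : ∫ ω, f (W ω) ∂P = ∫ x, f x ∂μ := by
  subst hW
  exact (integral_map (AEMeasurable.of_map_ne_zero hμ) hf).symm

end MapEq

theorem sum_setIntegral_fiber_eq_integral {Ω ι : Type*} [MeasurableSpace Ω] [MeasurableSpace ι]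
    [MeasurableSingletonClass ι] {P : Measure Ω} {Z : Ω → ι} (hZ : Measurable Z)
    (s : Finset ι) (hZs : ∀ ω, Z ω ∈ s) {g : Ω → ℝ} (hg : Integrable g P) :
    ∑ z ∈ s, ∫ ω in {ω | Z ω = z}, g ω ∂P = ∫ ω, g ω ∂P := by
  have hcover : (⋃ z ∈ s, {ω | Z ω = z}) = univ :=
    eq_univ_of_forall fun ω => mem_biUnion (hZs ω) rfl
  have hdisj : (s : Set ι).PairwiseDisjoint fun z => {ω | Z ω = z} :=
    fun _ _ _ _ hne => disjoint_left.2 fun _ h₁ h₂ => hne (h₁.symm.trans h₂)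
  rw [← integral_biUnion_finset s (s := fun z => {ω | Z ω = z})
    (fun z _ => hZ (measurableSet_singleton z)) hdisj fun _ _ => hg.integrableOn, hcover,
    setIntegral_univ]

theorem integral_Icc_zero_one_min_half : ∫ t in Icc (0 : ℝ) 1, min t (1 / 2) = 3 / 8 := by
  have hcont : Continuous fun t : ℝ => min t (1 / 2) := continuous_id.min continuous_const
  have hleft : ∫ t in (0 : ℝ)..1 / 2, min t (1 / 2) = 1 / 8 := by
    rw [intervalIntegral.integral_congr (f := fun t => min t (1 / 2)) (g := id)
      fun t ht => min_eq_left (uIcc_of_le (by norm_num : (0 : ℝ) ≤ 1 / 2) ▸ ht).2]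
    norm_num
  have hright : ∫ t in (1 / 2 : ℝ)..1, min t (1 / 2) = 1 / 4 := by
    rw [intervalIntegral.integral_congr (f := fun t => min t (1 / 2)) (g := fun _ => 1 / 2)
      fun t ht => min_eq_right (uIcc_of_le (by norm_num : (1 / 2 : ℝ) ≤ 1) ▸ ht).1]
    norm_num
  rw [integral_Icc_eq_integral_Ioc, ← intervalIntegral.integral_of_le zero_le_one,
    ← intervalIntegral.integral_add_adjacent_intervals (b := 1 / 2)
      (hcont.intervalIntegrable _ _) (hcont.intervalIntegrable _ _), hleft, hright]
  norm_num

section Uniform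

variable {Ω : Type*} [MeasurableSpace Ω] {P : Measure Ω} {W : Ω → ℝ}

theorem volume_restrict_Icc_zero_one_ne_zero : volume.restrict (Icc (0 : ℝ) 1) ≠ 0 := by
  simp

theorem integrable_of_map_eq_uniform (hW : P.map W = volume.restrict (Icc 0 1)) :
    Integrable W P :=
  integrable_comp_of_map_eq (f := id) hW volume_restrict_Icc_zero_one_ne_zero
    continuous_id.integrableOn_Icc

theorem integral_min_half_of_map_eq_uniform (hW : P.map W = volume.restrict (Icc 0 1)) :
    ∫ ω, min (W ω) (1 / 2) ∂P = 3 / 8 := by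
  rw [integral_comp_of_map_eq (f := fun t => min t (1 / 2)) hW
    volume_restrict_Icc_zero_one_ne_zero (continuous_id.min continuous_const).aestronglyMeasurable]
  exact integral_Icc_zero_one_min_half

end Uniform

noncomputable def minMinorant (u v : ℝ) : ℝ := min u (1 / 2) + min v (1 / 2) - 1 / 2

theorem minMinorant_le_min (u v : ℝ) : minMinorant u v ≤ min u v := by
  unfold minMinorant
  exact le_min (by linarith [min_le_left u (1 / 2 : ℝ), min_le_right v (1 / 2 : ℝ)])
    (by linarith [min_le_right u (1 / 2 : ℝ), min_le_left v (1 / 2 : ℝ)])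

theorem minMinorant_le_one (u v : ℝ) : minMinorant u v ≤ 1 := by
  unfold minMinorant
  linarith [min_le_right u (1 / 2 : ℝ), min_le_right v (1 / 2 : ℝ)]

section Coupling

variable {Ω : Type*} [MeasurableSpace Ω] {P : Measure Ω} {U V : Ω → ℝ}

theorem integrable_minMinorant [IsFiniteMeasure P] (hU : P.map U = volume.restrict (Icc 0 1))
    (hV : P.map V = volume.restrict (Icc 0 1)) :
    Integrable (fun ω => minMinorant (U ω) (V ω)) P :=
  (((integrable_of_map_eq_uniform hU).inf (integrable_const _)).add
    ((integrable_of_map_eq_uniform hV).inf (integrable_const _))).sub (integrable_const _)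

theorem integral_minMinorant [IsProbabilityMeasure P] (hU : P.map U = volume.restrict (Icc 0 1))
    (hV : P.map V = volume.restrict (Icc 0 1)) :
    ∫ ω, minMinorant (U ω) (V ω) ∂P = 1 / 4 := by
  have hUhalf : Integrable (fun ω => min (U ω) (1 / 2)) P :=
    (integrable_of_map_eq_uniform hU).inf (integrable_const _)
  have hVhalf : Integrable (fun ω => min (V ω) (1 / 2)) P :=
    (integrable_of_map_eq_uniform hV).inf (integrable_const _)
  unfold minMinorant
  rw [integral_sub (f := fun ω => min (U ω) (1 / 2) + min (V ω) (1 / 2)) (hUhalf.add hVhalf)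
    (integrable_const _), integral_add hUhalf hVhalf,
    integral_min_half_of_map_eq_uniform hU, integral_min_half_of_map_eq_uniform hV]
  norm_num

end Coupling

/-- Conditional expectations `E[·|Z=z]·P(Z=z)` are written as set integrals over `{Z=z}`. -/
theorem upper_bound_nonneg_general {Ω : Type*} [MeasurableSpace Ω]
    (P : Measure Ω) [IsProbabilityMeasure P] (X Y : Ω → ℝ) (Z : Ω → ℕ)
    (hZrange : ∀ ω, Z ω ∈ Finset.Icc 1 4) (hZm : Measurable Z)
    (F G : ℝ → ℝ)
    (hFX : Measure.map (fun ω => F (X ω)) P = volume.restrict (Icc (0:ℝ) 1))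
    (hGY : Measure.map (fun ω => G (Y ω)) P = volume.restrict (Icc (0:ℝ) 1)) :
    0 ≤ 4 * (∫ ω in {ω | Z ω = 1}, min (F (X ω)) (G (Y ω)) ∂P) +
        4 * (∫ ω in {ω | Z ω = 2}, F (X ω) ∂P) +
        4 * (∫ ω in {ω | Z ω = 3}, G (Y ω) ∂P) +
        4 * (P {ω | Z ω = 4}).toReal - 1 := by
  have hU := integrable_of_map_eq_uniform hFX
  have hV := integrable_of_map_eq_uniform hGY
  have hUV : Integrable (fun ω => min (F (X ω)) (G (Y ω))) P := hU.inf hV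
  have hm := integrable_minMinorant hFX hGY
  have htotal := sum_setIntegral_fiber_eq_integral hZm _ hZrange hm
  rw [Finset.sum_Icc_succ_top (by norm_num), Finset.sum_Icc_succ_top (by norm_num),
    Finset.sum_Icc_succ_top (by norm_num), Finset.Icc_self, Finset.sum_singleton,
    integral_minMinorant hFX hGY] at htotal
  simp only [Nat.reduceAdd] at htotal
  have h₁ := setIntegral_mono (s := {ω | Z ω = 1}) hm.integrableOn
    hUV.integrableOn fun ω => minMinorant_le_min (F (X ω)) (G (Y ω))
  have h₂ := setIntegral_mono (s := {ω | Z ω = 2}) hm.integrableOn hU.integrableOn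
    fun ω => (minMinorant_le_min _ _).trans (min_le_left _ (G (Y ω)))
  have h₃ := setIntegral_mono (s := {ω | Z ω = 3}) hm.integrableOn hV.integrableOn
    fun ω => (minMinorant_le_min _ _).trans (min_le_right (F (X ω)) _)
  have h₄ := setIntegral_mono (s := {ω | Z ω = 4}) hm.integrableOn
    (integrable_const (1 : ℝ)).integrableOn fun ω => minMinorant_le_one (F (X ω)) (G (Y ω))
  rw [setIntegral_const, smul_eq_mul, mul_one, measureReal_def] at h₄
  linarith

/-- The worst-case upper bound on Kendall's tau always satisfies τ̄(P) ≥ 0,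
whenever F(X) and G(Y) are uniform on [0,1].  Conditional expectations
E[·|Z=z]·P(Z=z) are written as set integrals over {Z=z}. -/
theorem upper_bound_nonneg {Ω : Type*} [MeasurableSpace Ω]
    (P : Measure Ω) [IsProbabilityMeasure P] (X Y : Ω → ℝ) (Z : Ω → ℕ)
    (hZrange : ∀ ω, Z ω ∈ Finset.Icc 1 4) (hZm : Measurable Z)
    (F G : ℝ → ℝ)
    (hFXm : Measurable (fun ω => F (X ω))) (hGYm : Measurable (fun ω => G (Y ω)))
    (hFX : Measure.map (fun ω => F (X ω)) P = volume.restrict (Icc (0:ℝ) 1))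
    (hGY : Measure.map (fun ω => G (Y ω)) P = volume.restrict (Icc (0:ℝ) 1)) :
    0 ≤ 4 * (∫ ω in {ω | Z ω = 1}, min (F (X ω)) (G (Y ω)) ∂P) +
        4 * (∫ ω in {ω | Z ω = 2}, F (X ω) ∂P) +
        4 * (∫ ω in {ω | Z ω = 3}, G (Y ω) ∂P) +
        4 * (P {ω | Z ω = 4}).toReal - 1 :=
  upper_bound_nonneg_general P X Y Z hZrange hZm F G hFX hGY
end

section
/- Let s : ℝ² → ℝ be a bounded measurable supermodular function and U uniform on [0,1]. For any random variables X, Y with continuous strictly increasing CDFs F and G, and any coupling of X and Y, one has E[s(X,Y)] ≥ E[s(F⁻¹(U), G⁻¹(1−U))], i.e., the countermonotonic coupling minimizes the expectation of a supermodular function over all couplings with fixed margins. -/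
/-!
Write `s x y = s x v₀ + s u₀ y - s u₀ v₀ + Δ(x, y)`, where `Δ(x, y)` is the increment of `s`
over the rectangle `[u₀, x] × [v₀, y]`. The first three terms have the same integral under every
coupling of the two margins. Rounding `(x, y)` up to a grid `u₀ ≤ ⋯ ≤ uₙ`, `v₀ ≤ ⋯ ≤ vₙ` turns
`Δ` into a combination of orthant indicators `1{x > uᵢ, y > vⱼ}` with the cell increments of `s`
as coefficients, which are nonnegative by supermodularity; so its integral is monotone in the
orthant probabilities, and these are smallest for the countermonotonic coupling, where they equal
the Fréchet–Hoeffding bound `max (1 - F a - G b) 0`. Since `Δ` is monotone in each variable on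
the grid box, the rounding error is dominated by functions of one variable whose integrals are
`O(M)` times the largest cell probability; continuity of the margins makes that arbitrarily small.
-/

open MeasureTheory Set ProbabilityTheory
open scoped Finset

section Supermodular

def IsSupermodular (s : ℝ → ℝ → ℝ) : Prop :=
  ∀ x₁ x₂ y₁ y₂ : ℝ, x₁ ≤ x₂ → y₁ ≤ y₂ → s x₁ y₂ + s x₂ y₁ ≤ s x₁ y₁ + s x₂ y₂

def rectIncr (s : ℝ → ℝ → ℝ) (a b c d : ℝ) : ℝ := s b d - s a d - s b c + s a c

variable {s : ℝ → ℝ → ℝ} {M a b c d : ℝ}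

lemma IsSupermodular.rectIncr_nonneg (hs : IsSupermodular s) (hab : a ≤ b) (hcd : c ≤ d) :
    0 ≤ rectIncr s a b c d := by
  have := hs a b c d hab hcd
  unfold rectIncr
  linarith

lemma IsSupermodular.rectIncr_mono (hs : IsSupermodular s) {a' b' c' d' : ℝ}
    (ha : a' ≤ a) (hab : a ≤ b) (hb : b ≤ b') (hc : c' ≤ c) (hcd : c ≤ d) (hd : d ≤ d') :
    rectIncr s a b c d ≤ rectIncr s a' b' c' d' := by
  have h₁ := hs.rectIncr_nonneg ha hcd
  have h₂ := hs.rectIncr_nonneg hb hcd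
  have h₃ := hs.rectIncr_nonneg (ha.trans (hab.trans hb)) hc
  have h₄ := hs.rectIncr_nonneg (ha.trans (hab.trans hb)) hd
  unfold rectIncr at *
  linarith

lemma abs_rectIncr_le (hM : ∀ x y, |s x y| ≤ M) (a b c d : ℝ) : |rectIncr s a b c d| ≤ 4 * M := by
  have := hM a c; have := hM b c; have := hM a d; have := hM b d
  rw [rectIncr, abs_le] at *
  constructor <;> linarith

lemma sum_range_rectIncr_fst (u : ℕ → ℝ) (c d : ℝ) (n : ℕ) :
    ∑ i ∈ Finset.range n, rectIncr s (u i) (u (i + 1)) c d = rectIncr s (u 0) (u n) c d := by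
  induction n with
  | zero => simp [rectIncr]
  | succ n ih => rw [Finset.sum_range_succ, ih]; unfold rectIncr; ring

lemma sum_range_rectIncr_snd (a b : ℝ) (v : ℕ → ℝ) (n : ℕ) :
    ∑ j ∈ Finset.range n, rectIncr s a b (v j) (v (j + 1)) = rectIncr s a b (v 0) (v n) := by
  induction n with
  | zero => simp [rectIncr]
  | succ n ih => rw [Finset.sum_range_succ, ih]; unfold rectIncr; ring

end Supermodular

section Grid

noncomputable def gridIndex (u : ℕ → ℝ) (n : ℕ) (x : ℝ) : ℕ := #{i ∈ Finset.range n | u i < x}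

variable {u : ℕ → ℝ} {n i : ℕ} {x : ℝ}

lemma gridIndex_le : gridIndex u n x ≤ n :=
  (Finset.card_filter_le _ _).trans_eq (Finset.card_range n)

lemma Monotone.lt_iff_lt_gridIndex (hu : Monotone u) (hi : i < n) :
    u i < x ↔ i < gridIndex u n x := by
  constructor
  · intro hx
    have : Finset.range (i + 1) ⊆ {j ∈ Finset.range n | u j < x} := fun j hj => by
      have hji : j ≤ i := Nat.lt_succ_iff.mp (Finset.mem_range.mp hj)
      exact Finset.mem_filter.mpr ⟨Finset.mem_range.mpr (hji.trans_lt hi), (hu hji).trans_lt hx⟩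
    simpa [gridIndex] using Finset.card_le_card this
  · intro hk
    by_contra hx
    have : {j ∈ Finset.range n | u j < x} ⊆ Finset.range i := fun j hj => by
      rw [Finset.mem_filter] at hj
      exact Finset.mem_range.mpr (lt_of_not_ge fun hij => hx ((hu hij).trans_lt hj.2))
    exact (Finset.card_le_card this).trans_eq (Finset.card_range i) |>.not_gt hk

lemma Monotone.filter_lt_eq_range_gridIndex (hu : Monotone u) :
    {i ∈ Finset.range n | u i < x} = Finset.range (gridIndex u n x) := by
  ext i
  simp only [Finset.mem_filter, Finset.mem_range]
  exact ⟨fun ⟨hi, hx⟩ => (hu.lt_iff_lt_gridIndex hi).mp hx,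
    fun hk => have hi := hk.trans_le gridIndex_le; ⟨hi, (hu.lt_iff_lt_gridIndex hi).mpr hk⟩⟩

lemma Monotone.exists_gridIndex_eq_succ (hu : Monotone u) (hx : x ∈ Ioc (u 0) (u n)) :
    ∃ i < n, gridIndex u n x = i + 1 ∧ x ∈ Ioc (u i) (u (i + 1)) := by
  have hn : 0 < n := Nat.pos_of_ne_zero fun h => by subst h; exact (hx.1.trans_le hx.2).false
  obtain ⟨i, hi⟩ := Nat.exists_eq_succ_of_ne_zero ((hu.lt_iff_lt_gridIndex hn).mp hx.1).ne'
  have hin : i < n := by have := gridIndex_le (u := u) (n := n) (x := x); omega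
  refine ⟨i, hin, hi, (hu.lt_iff_lt_gridIndex hin).mpr (by omega), ?_⟩
  rcases (Nat.succ_le_of_lt hin).eq_or_lt with h | h
  · rw [Nat.succ_eq_add_one] at h; exact h ▸ hx.2
  · exact not_lt.mp fun h' => ((hu.lt_iff_lt_gridIndex h).mp h').ne hi.symm

end Grid

section Approximation

variable {s : ℝ → ℝ → ℝ} {u v w : ℕ → ℝ} {n i j : ℕ} {M C x y : ℝ} {e : ℕ → ℝ}

noncomputable def orthantStep (u v : ℕ → ℝ) (n : ℕ) (c : ℕ → ℕ → ℝ) (p : ℝ × ℝ) : ℝ :=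
  ∑ i ∈ Finset.range n, ∑ j ∈ Finset.range n,
    (Ioi (u i) ×ˢ Ioi (v j)).indicator (fun _ => c i j) p

lemma Monotone.orthantStep_rectIncr (hu : Monotone u) (hv : Monotone v) (x y : ℝ) :
    orthantStep u v n (fun i j => rectIncr s (u i) (u (i + 1)) (v j) (v (j + 1))) (x, y) =
      rectIncr s (u 0) (u (gridIndex u n x)) (v 0) (v (gridIndex v n y)) := by
  simp only [orthantStep, indicator_apply, mem_prod, mem_Ioi, ite_and, Finset.sum_ite_irrel,
    Finset.sum_const_zero]
  rw [← Finset.sum_filter, hu.filter_lt_eq_range_gridIndex]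
  simp only [← Finset.sum_filter, hv.filter_lt_eq_range_gridIndex, sum_range_rectIncr_snd,
    sum_range_rectIncr_fst]

/-- `s x y` with its interaction term `rectIncr s (u 0) x (v 0) y` evaluated at the grid point
above `(x, y)` instead (see `Monotone.orthantStep_rectIncr`). -/
noncomputable def gridApprox (s : ℝ → ℝ → ℝ) (u v : ℕ → ℝ) (n : ℕ) (p : ℝ × ℝ) : ℝ :=
  s p.1 (v 0) - s (u 0) (v 0) + s (u 0) p.2 +
    orthantStep u v n (fun i j => rectIncr s (u i) (u (i + 1)) (v j) (v (j + 1))) p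

noncomputable def gridError (w : ℕ → ℝ) (n : ℕ) (e : ℕ → ℝ) (C x : ℝ) : ℝ :=
  ∑ i ∈ Finset.range n, (Ioc (w i) (w (i + 1))).indicator (fun _ => e i) x +
    (Ioc (w 0) (w n))ᶜ.indicator (fun _ => C) x

lemma gridError_nonneg (he : ∀ i, 0 ≤ e i) (hC : 0 ≤ C) (x : ℝ) : 0 ≤ gridError w n e C x :=
  add_nonneg (Finset.sum_nonneg fun i _ => indicator_nonneg (fun _ _ => he i) x)
    (indicator_nonneg (fun _ _ => hC) x)

lemma le_gridError_of_mem (he : ∀ i, 0 ≤ e i) (hC : 0 ≤ C) (hi : i < n)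
    (hx : x ∈ Ioc (w i) (w (i + 1))) : e i ≤ gridError w n e C x := by
  have : e i ≤ ∑ i ∈ Finset.range n, (Ioc (w i) (w (i + 1))).indicator (fun _ => e i) x := by
    refine (indicator_of_mem hx (fun _ => e i)).symm.le.trans ?_
    exact Finset.single_le_sum (f := fun i => (Ioc (w i) (w (i + 1))).indicator (fun _ => e i) x)
      (fun i _ => indicator_nonneg (fun _ _ => he i) x) (Finset.mem_range.mpr hi)
  exact this.trans (le_add_of_nonneg_right (indicator_nonneg (fun _ _ => hC) x))

lemma le_gridError_of_notMem (he : ∀ i, 0 ≤ e i) (hx : x ∉ Ioc (w 0) (w n)) :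
    C ≤ gridError w n e C x := by
  rw [gridError, indicator_of_mem (mem_compl hx)]
  exact le_add_of_nonneg_left (Finset.sum_nonneg fun i _ => indicator_nonneg (fun _ _ => he i) x)

lemma IsSupermodular.abs_rectIncr_sub_rectIncr_le (hs : IsSupermodular s) (hu : Monotone u)
    (hv : Monotone v) (hi : i < n) (hj : j < n) (hx : x ∈ Ioc (u i) (u (i + 1)))
    (hy : y ∈ Ioc (v j) (v (j + 1))) :
    |rectIncr s (u 0) x (v 0) y - rectIncr s (u 0) (u (i + 1)) (v 0) (v (j + 1))| ≤
      rectIncr s (u i) (u (i + 1)) (v 0) (v n) + rectIncr s (u 0) (u n) (v j) (v (j + 1)) := by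
  have hx₀ : u 0 ≤ x := (hu i.zero_le).trans hx.1.le
  -- the rectangles `[x, uᵢ₊₁] × [v₀, vⱼ₊₁]` and `[u₀, x] × [y, vⱼ₊₁]` lie in a column and
  -- in a row of grid cells
  have hdiff : rectIncr s (u 0) (u (i + 1)) (v 0) (v (j + 1)) - rectIncr s (u 0) x (v 0) y =
      rectIncr s x (u (i + 1)) (v 0) (v (j + 1)) + rectIncr s (u 0) x y (v (j + 1)) := by
    unfold rectIncr; ring
  have h₁ := hs.rectIncr_nonneg hx.2 (hv (j + 1).zero_le)
  have h₁' : rectIncr s x (u (i + 1)) (v 0) (v (j + 1)) ≤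
      rectIncr s (u i) (u (i + 1)) (v 0) (v n) :=
    hs.rectIncr_mono hx.1.le hx.2 le_rfl le_rfl (hv (j + 1).zero_le) (hv hj)
  have h₂ := hs.rectIncr_nonneg hx₀ hy.2
  have h₂' : rectIncr s (u 0) x y (v (j + 1)) ≤ rectIncr s (u 0) (u n) (v j) (v (j + 1)) :=
    hs.rectIncr_mono le_rfl hx₀ (hx.2.trans (hu hi)) hy.1.le hy.2 le_rfl
  rw [abs_sub_comm, abs_le]
  constructor <;> linarith

theorem IsSupermodular.abs_sub_gridApprox_le (hs : IsSupermodular s) (hM : ∀ x y, |s x y| ≤ M)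
    (hu : Monotone u) (hv : Monotone v) (x y : ℝ) :
    |s x y - gridApprox s u v n (x, y)| ≤
      gridError u n (fun i => rectIncr s (u i) (u (i + 1)) (v 0) (v n)) (8 * M) x +
        gridError v n (fun j => rectIncr s (u 0) (u n) (v j) (v (j + 1))) (8 * M) y := by
  have hC : 0 ≤ 8 * M := by linarith [(abs_nonneg _).trans (hM 0 0)]
  have he₁ : ∀ i, 0 ≤ rectIncr s (u i) (u (i + 1)) (v 0) (v n) := fun i =>
    hs.rectIncr_nonneg (hu i.le_succ) (hv n.zero_le)
  have he₂ : ∀ j, 0 ≤ rectIncr s (u 0) (u n) (v j) (v (j + 1)) := fun j =>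
    hs.rectIncr_nonneg (hu n.zero_le) (hv j.le_succ)
  have hsplit : s x y - gridApprox s u v n (x, y) =
      rectIncr s (u 0) x (v 0) y -
        rectIncr s (u 0) (u (gridIndex u n x)) (v 0) (v (gridIndex v n y)) := by
    rw [gridApprox, hu.orthantStep_rectIncr hv]; unfold rectIncr; ring
  rw [hsplit]
  by_cases hbox : x ∈ Ioc (u 0) (u n) ∧ y ∈ Ioc (v 0) (v n)
  · obtain ⟨i, hi, hk, hxi⟩ := hu.exists_gridIndex_eq_succ hbox.1
    obtain ⟨j, hj, hl, hyj⟩ := hv.exists_gridIndex_eq_succ hbox.2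
    rw [hk, hl]
    exact (hs.abs_rectIncr_sub_rectIncr_le hu hv hi hj hxi hyj).trans
      (add_le_add (le_gridError_of_mem he₁ hC hi hxi) (le_gridError_of_mem he₂ hC hj hyj))
  · have hbound : 8 * M ≤
        gridError u n (fun i => rectIncr s (u i) (u (i + 1)) (v 0) (v n)) (8 * M) x +
          gridError v n (fun j => rectIncr s (u 0) (u n) (v j) (v (j + 1))) (8 * M) y := by
      rcases not_and_or.mp hbox with h | h
      · linarith [le_gridError_of_notMem he₁ h (C := 8 * M),
          gridError_nonneg he₂ hC y (w := v) (n := n)]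
      · linarith [le_gridError_of_notMem he₂ h (C := 8 * M),
          gridError_nonneg he₁ hC x (w := u) (n := n)]
    calc _ ≤ _ := abs_sub _ _
      _ ≤ 4 * M + 4 * M := add_le_add (abs_rectIncr_le hM _ _ _ _) (abs_rectIncr_le hM _ _ _ _)
      _ ≤ _ := by linarith

end Approximation

section Integrals

variable {α : Type*} [MeasurableSpace α] {s : ℝ → ℝ → ℝ} {u v w : ℕ → ℝ} {n : ℕ} {M C ε : ℝ}
  {e : ℕ → ℝ} {c : ℕ → ℕ → ℝ} {γ γ₁ γ₂ : Measure (ℝ × ℝ)} {μ : Measure ℝ}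

lemma integral_le_add_of_abs_sub_le {ν₁ ν₂ : Measure α} {f φ E : α → ℝ}
    (hf₁ : Integrable f ν₁) (hf₂ : Integrable f ν₂) (hφ₁ : Integrable φ ν₁)
    (hφ₂ : Integrable φ ν₂) (hE₁ : Integrable E ν₁) (hE₂ : Integrable E ν₂)
    (hfφ : ∀ x, |f x - φ x| ≤ E x) (hφ : ∫ x, φ x ∂ν₁ ≤ ∫ x, φ x ∂ν₂)
    (hE : ∫ x, E x ∂ν₁ = ∫ x, E x ∂ν₂) :
    ∫ x, f x ∂ν₁ ≤ ∫ x, f x ∂ν₂ + 2 * ∫ x, E x ∂ν₂ := by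
  have h₁ : ∫ x, f x ∂ν₁ ≤ ∫ x, φ x ∂ν₁ + ∫ x, E x ∂ν₁ := by
    rw [← integral_add hφ₁ hE₁]
    exact integral_mono hf₁ (hφ₁.add hE₁) fun x => by linarith [(abs_le.mp (hfφ x)).2]
  have h₂ : ∫ x, φ x ∂ν₂ ≤ ∫ x, f x ∂ν₂ + ∫ x, E x ∂ν₂ := by
    rw [← integral_add hf₂ hE₂]
    exact integral_mono hφ₂ (hf₂.add hE₂) fun x => by linarith [(abs_le.mp (hfφ x)).1]
  linarith

lemma integral_comp_fst_add_comp_snd {γ : Measure (ℝ × ℝ)} {f g : ℝ → ℝ}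
    (hf : Integrable f (γ.map Prod.fst)) (hg : Integrable g (γ.map Prod.snd)) :
    ∫ p, f p.1 + g p.2 ∂γ = ∫ x, f x ∂(γ.map Prod.fst) + ∫ y, g y ∂(γ.map Prod.snd) := by
  rw [integral_add (f := fun p : ℝ × ℝ => f p.1) (g := fun p : ℝ × ℝ => g p.2)
      (hf.comp_measurable measurable_fst) (hg.comp_measurable measurable_snd),
    integral_map measurable_fst.aemeasurable hf.aestronglyMeasurable,
    integral_map measurable_snd.aemeasurable hg.aestronglyMeasurable]

lemma integral_comp_fst_add_comp_snd_congr (hfst : γ₁.map Prod.fst = γ₂.map Prod.fst)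
    (hsnd : γ₁.map Prod.snd = γ₂.map Prod.snd) {f g : ℝ → ℝ}
    (hf : Integrable f (γ₂.map Prod.fst)) (hg : Integrable g (γ₂.map Prod.snd)) :
    ∫ p, f p.1 + g p.2 ∂γ₁ = ∫ p, f p.1 + g p.2 ∂γ₂ := by
  rw [integral_comp_fst_add_comp_snd (hfst ▸ hf) (hsnd ▸ hg),
    integral_comp_fst_add_comp_snd hf hg, hfst, hsnd]

lemma integrable_orthantStep [IsFiniteMeasure γ] : Integrable (orthantStep u v n c) γ :=
  integrable_finsetSum _ fun _ _ => integrable_finsetSum _ fun _ _ =>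
    (integrable_const _).indicator (measurableSet_Ioi.prod measurableSet_Ioi)

lemma integral_orthantStep [IsFiniteMeasure γ] :
    ∫ p, orthantStep u v n c p ∂γ =
      ∑ i ∈ Finset.range n, ∑ j ∈ Finset.range n, γ.real (Ioi (u i) ×ˢ Ioi (v j)) * c i j := by
  unfold orthantStep
  rw [integral_finsetSum _ fun _ _ => integrable_finsetSum _ fun _ _ =>
    (integrable_const _).indicator (measurableSet_Ioi.prod measurableSet_Ioi)]
  refine Finset.sum_congr rfl fun i _ => ?_
  rw [integral_finsetSum _ fun _ _ =>
    (integrable_const _).indicator (measurableSet_Ioi.prod measurableSet_Ioi)]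
  refine Finset.sum_congr rfl fun j _ => ?_
  rw [integral_indicator_const _ (measurableSet_Ioi.prod measurableSet_Ioi), smul_eq_mul]

lemma integral_orthantStep_mono [IsFiniteMeasure γ₁] [IsFiniteMeasure γ₂]
    (horth : ∀ a b, γ₁.real (Ioi a ×ˢ Ioi b) ≤ γ₂.real (Ioi a ×ˢ Ioi b))
    (hc : ∀ i j, 0 ≤ c i j) :
    ∫ p, orthantStep u v n c p ∂γ₁ ≤ ∫ p, orthantStep u v n c p ∂γ₂ := by
  rw [integral_orthantStep, integral_orthantStep]
  gcongr with i _ j _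
  · exact hc i j
  · exact horth _ _

lemma integrable_gridApprox [IsFiniteMeasure γ] (hsm : Measurable (fun p : ℝ × ℝ => s p.1 p.2))
    (hM : ∀ x y, |s x y| ≤ M) : Integrable (gridApprox s u v n) γ := by
  refine ((Integrable.sub ?_ (integrable_const _)).add ?_).add integrable_orthantStep
  · exact .of_bound (hsm.comp (measurable_fst.prodMk measurable_const)).aestronglyMeasurable M
      (.of_forall fun _ => hM _ _)
  · exact .of_bound (hsm.comp (measurable_const.prodMk measurable_snd)).aestronglyMeasurable M
      (.of_forall fun _ => hM _ _)

lemma IsSupermodular.integral_gridApprox_mono (hs : IsSupermodular s)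
    (hsm : Measurable (fun p : ℝ × ℝ => s p.1 p.2)) (hM : ∀ x y, |s x y| ≤ M)
    (hu : Monotone u) (hv : Monotone v) [IsFiniteMeasure γ₁] [IsFiniteMeasure γ₂]
    (hfst : γ₁.map Prod.fst = γ₂.map Prod.fst) (hsnd : γ₁.map Prod.snd = γ₂.map Prod.snd)
    (horth : ∀ a b, γ₁.real (Ioi a ×ˢ Ioi b) ≤ γ₂.real (Ioi a ×ˢ Ioi b)) :
    ∫ p, gridApprox s u v n p ∂γ₁ ≤ ∫ p, gridApprox s u v n p ∂γ₂ := by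
  set f : ℝ → ℝ := fun x => s x (v 0) - s (u 0) (v 0)
  set g : ℝ → ℝ := fun y => s (u 0) y
  have hf : ∀ (ν : Measure ℝ) [IsFiniteMeasure ν], Integrable f ν := fun ν _ =>
    .of_bound ((hsm.comp (measurable_id.prodMk measurable_const)).sub_const _).aestronglyMeasurable
      (M + M) (.of_forall fun _ => (abs_sub _ _).trans (add_le_add (hM _ _) (hM _ _)))
  have hg : ∀ (ν : Measure ℝ) [IsFiniteMeasure ν], Integrable g ν := fun ν _ =>
    .of_bound (hsm.comp (measurable_const.prodMk measurable_id)).aestronglyMeasurable M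
      (.of_forall fun _ => hM _ _)
  have hsplit : ∀ (γ : Measure (ℝ × ℝ)) [IsFiniteMeasure γ],
      ∫ p, gridApprox s u v n p ∂γ = ∫ p, f p.1 + g p.2 ∂γ +
        ∫ p, orthantStep u v n (fun i j => rectIncr s (u i) (u (i + 1)) (v j) (v (j + 1))) p ∂γ :=
    fun γ _ => integral_add (((hf _).comp_measurable measurable_fst).add
      ((hg _).comp_measurable measurable_snd)) integrable_orthantStep
  rw [hsplit γ₁, hsplit γ₂, integral_comp_fst_add_comp_snd_congr hfst hsnd (hf _) (hg _)]
  exact add_le_add_right (integral_orthantStep_mono horth fun i j =>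
    hs.rectIncr_nonneg (hu i.le_succ) (hv j.le_succ)) _

lemma integrable_gridError [IsFiniteMeasure μ] : Integrable (gridError w n e C) μ :=
  (integrable_finsetSum _ fun _ _ => (integrable_const _).indicator measurableSet_Ioc).add
    ((integrable_const _).indicator measurableSet_Ioc.compl)

lemma integral_gridError_le [IsFiniteMeasure μ] (he : ∀ i, 0 ≤ e i) (hC : 0 ≤ C)
    (hcell : ∀ i < n, μ.real (Ioc (w i) (w (i + 1))) ≤ ε)
    (htail : μ.real (Ioc (w 0) (w n))ᶜ ≤ ε) :
    ∫ x, gridError w n e C x ∂μ ≤ ε * (∑ i ∈ Finset.range n, e i + C) := by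
  unfold gridError
  rw [integral_add (integrable_finsetSum _ fun _ _ =>
      (integrable_const _).indicator measurableSet_Ioc)
      ((integrable_const _).indicator measurableSet_Ioc.compl),
    integral_finsetSum _ fun _ _ => (integrable_const _).indicator measurableSet_Ioc,
    integral_indicator_const _ measurableSet_Ioc.compl, mul_add, Finset.mul_sum]
  simp only [integral_indicator_const _ measurableSet_Ioc, smul_eq_mul]
  gcongr with i hi
  · exact he i
  · exact hcell i (Finset.mem_range.mp hi)

end Integrals

section Cdf

variable {μ : Measure ℝ}

lemma exists_cdf_eq (hμ : Continuous (cdf μ)) {t : ℝ} (ht : t ∈ Ioo 0 1) : ∃ x, cdf μ x = t :=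
  mem_range_of_exists_le_of_exists_ge hμ
    ((tendsto_cdf_atBot μ).eventually (eventually_le_nhds ht.1)).exists
    ((tendsto_cdf_atTop μ).eventually (eventually_ge_nhds ht.2)).exists

lemma measureReal_Ioc_eq_cdf_sub [IsProbabilityMeasure μ] {a b : ℝ} (hab : a ≤ b) :
    μ.real (Ioc a b) = cdf μ b - cdf μ a := by
  rw [cdf_eq_real, cdf_eq_real, ← Iic_sdiff_Iic,
    measureReal_sdiff (Iic_subset_Iic.mpr hab) measurableSet_Iic]

/-- Grid points at the quantile levels `1/(n+2), …, (n+1)/(n+2)`. -/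
lemma exists_monotone_grid [IsProbabilityMeasure μ] (hμ : Continuous (cdf μ)) (n : ℕ) :
    ∃ u : ℕ → ℝ, Monotone u ∧ (∀ i < n, μ.real (Ioc (u i) (u (i + 1))) ≤ 2 / (n + 2)) ∧
      μ.real (Ioc (u 0) (u n))ᶜ ≤ 2 / (n + 2) := by
  have hlevel : ∀ k : ℕ, ((min k n : ℕ) + 1 : ℝ) / (n + 2) ∈ Ioo (0 : ℝ) 1 := fun k => by
    have : ((min k n : ℕ) : ℝ) ≤ n := by exact_mod_cast min_le_right k n
    constructor
    · positivity
    · rw [div_lt_one (by positivity)]; linarith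
  choose q hq using fun k => exists_cdf_eq hμ (hlevel k)
  set u : ℕ → ℝ := fun i => q (min i n)
  have hcdf : ∀ i, cdf μ (u i) = ((min i n : ℕ) + 1 : ℝ) / (n + 2) := fun i => by
    simp only [u, hq, min_le_right, min_eq_left]
  have hu : Monotone u := fun i j hij => by
    by_contra hlt
    have h := (monotone_cdf μ (not_le.mp hlt).le)
    rw [hcdf, hcdf, div_le_div_iff_of_pos_right (by positivity), add_le_add_iff_right,
      Nat.cast_le] at h
    exact hlt (le_of_eq (congrArg q (le_antisymm (min_le_min_right n hij) h)))
  refine ⟨u, hu, fun i hi => ?_, ?_⟩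
  · rw [measureReal_Ioc_eq_cdf_sub (hu i.le_succ), hcdf, hcdf, min_eq_left hi.le,
      min_eq_left hi]
    push_cast
    rw [← sub_div]
    gcongr
    linarith
  · rw [measureReal_compl measurableSet_Ioc, measureReal_Ioc_eq_cdf_sub (hu n.zero_le), hcdf,
      hcdf, probReal_univ, min_self, min_eq_left n.zero_le]
    field_simp
    push_cast
    linarith

end Cdf

section Concordance

variable {s : ℝ → ℝ → ℝ} {u v : ℕ → ℝ} {n : ℕ} {M ε : ℝ} {γ₁ γ₂ : Measure (ℝ × ℝ)}

theorem IsSupermodular.integral_le_add_of_grid (hs : IsSupermodular s)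
    (hsm : Measurable (fun p : ℝ × ℝ => s p.1 p.2)) (hM : ∀ x y, |s x y| ≤ M)
    [IsFiniteMeasure γ₁] [IsFiniteMeasure γ₂]
    (hfst : γ₁.map Prod.fst = γ₂.map Prod.fst) (hsnd : γ₁.map Prod.snd = γ₂.map Prod.snd)
    (horth : ∀ a b, γ₁.real (Ioi a ×ˢ Ioi b) ≤ γ₂.real (Ioi a ×ˢ Ioi b))
    (hu : Monotone u) (hv : Monotone v)
    (hcu : ∀ i < n, (γ₂.map Prod.fst).real (Ioc (u i) (u (i + 1))) ≤ ε)
    (htu : (γ₂.map Prod.fst).real (Ioc (u 0) (u n))ᶜ ≤ ε)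
    (hcv : ∀ j < n, (γ₂.map Prod.snd).real (Ioc (v j) (v (j + 1))) ≤ ε)
    (htv : (γ₂.map Prod.snd).real (Ioc (v 0) (v n))ᶜ ≤ ε) :
    ∫ p, s p.1 p.2 ∂γ₁ ≤ ∫ p, s p.1 p.2 ∂γ₂ + 48 * M * ε := by
  set eX := gridError u n (fun i => rectIncr s (u i) (u (i + 1)) (v 0) (v n)) (8 * M)
  set eY := gridError v n (fun j => rectIncr s (u 0) (u n) (v j) (v (j + 1))) (8 * M)
  have hC : 0 ≤ 8 * M := by linarith [(abs_nonneg _).trans (hM 0 0)]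
  have hε : 0 ≤ ε := measureReal_nonneg.trans htu
  have hE : ∫ x, eX x ∂(γ₂.map Prod.fst) + ∫ y, eY y ∂(γ₂.map Prod.snd) ≤ 24 * M * ε := by
    have hX := integral_gridError_le (fun i => hs.rectIncr_nonneg (hu i.le_succ) (hv n.zero_le))
      hC hcu htu
    have hY := integral_gridError_le (fun j => hs.rectIncr_nonneg (hu n.zero_le) (hv j.le_succ))
      hC hcv htv
    rw [sum_range_rectIncr_fst] at hX
    rw [sum_range_rectIncr_snd] at hY
    have := (abs_le.mp (abs_rectIncr_le hM (u 0) (u n) (v 0) (v n))).2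
    nlinarith
  have hsγ : ∀ (γ : Measure (ℝ × ℝ)) [IsFiniteMeasure γ], Integrable (fun p => s p.1 p.2) γ :=
    fun _ _ => .of_bound hsm.aestronglyMeasurable M (.of_forall fun _ => hM _ _)
  have hEγ : ∀ (γ : Measure (ℝ × ℝ)) [IsFiniteMeasure γ], Integrable (fun p => eX p.1 + eY p.2) γ :=
    fun _ _ => (integrable_gridError.comp_measurable measurable_fst).add
      (integrable_gridError.comp_measurable measurable_snd)
  have key := integral_le_add_of_abs_sub_le (hsγ γ₁) (hsγ γ₂)
    (integrable_gridApprox hsm hM) (integrable_gridApprox hsm hM) (hEγ γ₁) (hEγ γ₂)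
    (fun p => hs.abs_sub_gridApprox_le hM hu hv p.1 p.2)
    (hs.integral_gridApprox_mono hsm hM hu hv hfst hsnd horth)
    (integral_comp_fst_add_comp_snd_congr hfst hsnd integrable_gridError integrable_gridError)
  rw [integral_comp_fst_add_comp_snd integrable_gridError integrable_gridError] at key
  linarith

open Filter Topology in
theorem IsSupermodular.integral_le_of_orthant_le (hs : IsSupermodular s)
    (hsm : Measurable (fun p : ℝ × ℝ => s p.1 p.2)) (hM : ∀ x y, |s x y| ≤ M)
    [IsFiniteMeasure γ₁] [IsProbabilityMeasure γ₂]
    (hfst : γ₁.map Prod.fst = γ₂.map Prod.fst) (hsnd : γ₁.map Prod.snd = γ₂.map Prod.snd)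
    (hcont₁ : Continuous (cdf (γ₂.map Prod.fst))) (hcont₂ : Continuous (cdf (γ₂.map Prod.snd)))
    (horth : ∀ a b, γ₁.real (Ioi a ×ˢ Ioi b) ≤ γ₂.real (Ioi a ×ˢ Ioi b)) :
    ∫ p, s p.1 p.2 ∂γ₁ ≤ ∫ p, s p.1 p.2 ∂γ₂ := by
  have : IsProbabilityMeasure (γ₂.map Prod.fst) := Measure.isProbabilityMeasure_map (by fun_prop)
  have : IsProbabilityMeasure (γ₂.map Prod.snd) := Measure.isProbabilityMeasure_map (by fun_prop)
  have hgrid : ∀ n : ℕ, ∫ p, s p.1 p.2 ∂γ₁ ≤ ∫ p, s p.1 p.2 ∂γ₂ + 48 * M * (2 / (n + 2)) := by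
    intro n
    obtain ⟨u, hu, hcu, htu⟩ := exists_monotone_grid hcont₁ n
    obtain ⟨v, hv, hcv, htv⟩ := exists_monotone_grid hcont₂ n
    exact hs.integral_le_add_of_grid hsm hM hfst hsnd horth hu hv hcu htu hcv htv
  have hlim : Tendsto (fun n : ℕ => ∫ p, s p.1 p.2 ∂γ₂ + 48 * M * (2 / ((n : ℝ) + 2))) atTop
      (𝓝 (∫ p, s p.1 p.2 ∂γ₂)) := by
    have : Tendsto (fun n : ℕ => 2 / ((n : ℝ) + 2)) atTop (𝓝 0) :=
      tendsto_const_nhds.div_atTop (tendsto_natCast_atTop_atTop.atTop_add tendsto_const_nhds)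
    simpa using tendsto_const_nhds.add (this.const_mul (48 * M))
  exact le_of_tendsto_of_tendsto' tendsto_const_nhds hlim hgrid

end Concordance

section Countermonotone

def IsQuantileFun (μ : Measure ℝ) (q : ℝ → ℝ) : Prop :=
  ∀ t ∈ Ioo (0 : ℝ) 1, ∀ x, q t ≤ x ↔ t ≤ cdf μ x

noncomputable def counterCoupling (q r : ℝ → ℝ) : Measure (ℝ × ℝ) :=
  (volume.restrict (Ioo 0 1)).map fun t => (q t, r (1 - t))

instance : IsProbabilityMeasure (volume.restrict (Ioo (0 : ℝ) 1)) := ⟨by simp⟩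

variable {s : ℝ → ℝ → ℝ} {M : ℝ} {μ ν : Measure ℝ} {q r : ℝ → ℝ}

lemma IsQuantileFun.monotoneOn (hq : IsQuantileFun μ q) : MonotoneOn q (Ioo 0 1) :=
  fun t ht t' ht' htt' => (hq t ht (q t')).mpr (htt'.trans ((hq t' ht' (q t')).mp le_rfl))

lemma IsQuantileFun.lt_iff (hq : IsQuantileFun μ q) {t : ℝ} (ht : t ∈ Ioo 0 1) (x : ℝ) :
    x < q t ↔ cdf μ x < t := by
  rw [← not_le, hq t ht, not_le]

lemma isQuantileFun_invFun_cdf (hc : Continuous (cdf μ)) (hs : StrictMono (cdf μ)) :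
    IsQuantileFun μ (Function.invFun (cdf μ)) := fun t ht x => by
  conv_rhs => rw [← Function.invFun_eq (exists_cdf_eq hc ht)]
  exact hs.le_iff_le.symm

lemma map_one_sub_restrict_Ioo :
    (volume.restrict (Ioo (0 : ℝ) 1)).map (fun t => 1 - t) = volume.restrict (Ioo 0 1) := by
  have hpre : (fun t : ℝ => 1 - t) ⁻¹' Ioo 0 1 = Ioo 0 1 := by
    ext t; simp only [mem_preimage, mem_Ioo]; constructor <;> intro h <;> constructor <;> linarith
  have := (volume.measurePreserving_sub_left (1 : ℝ)).restrict_preimage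
    (measurableSet_Ioo (a := (0 : ℝ)) (b := 1))
  rw [hpre] at this
  exact this.map_eq

lemma IsQuantileFun.map_restrict_Ioo [IsProbabilityMeasure μ] (hq : IsQuantileFun μ q) :
    (volume.restrict (Ioo (0 : ℝ) 1)).map q = μ := by
  have hqm : AEMeasurable q (volume.restrict (Ioo (0 : ℝ) 1)) :=
    aemeasurable_restrict_of_monotoneOn measurableSet_Ioo hq.monotoneOn
  have : IsProbabilityMeasure ((volume.restrict (Ioo (0 : ℝ) 1)).map q) :=
    Measure.isProbabilityMeasure_map hqm
  refine Measure.ext_of_Iic _ _ fun x => ?_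
  rw [Measure.map_apply_of_aemeasurable hqm measurableSet_Iic,
    Measure.restrict_apply' measurableSet_Ioo, ← ofReal_cdf]
  have hset : q ⁻¹' Iic x ∩ Ioo 0 1 = Ioo 0 1 ∩ Iic (cdf μ x) := by
    ext t
    simp only [mem_inter_iff, mem_preimage, mem_Iic]
    exact ⟨fun h => ⟨h.2, (hq t h.2 x).mp h.1⟩, fun h => ⟨(hq t h.1 x).mpr h.2, h.1⟩⟩
  rw [hset]
  apply le_antisymm
  · calc _ ≤ volume (Ioc 0 (cdf μ x)) := measure_mono fun t ht => ⟨ht.1.1, ht.2⟩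
      _ = _ := by rw [Real.volume_Ioc, sub_zero]
  · calc _ = volume (Ioo 0 (cdf μ x)) := by rw [Real.volume_Ioo, sub_zero]
      _ ≤ volume (Ioo 0 1 ∩ Iic (cdf μ x)) :=
        measure_mono fun t ht => ⟨⟨ht.1, ht.2.trans_le (cdf_le_one μ x)⟩, ht.2.le⟩

lemma aemeasurable_counterCoupling (hq : IsQuantileFun μ q) (hr : IsQuantileFun ν r) :
    AEMeasurable (fun t => (q t, r (1 - t))) (volume.restrict (Ioo 0 1)) := by
  refine (aemeasurable_restrict_of_monotoneOn measurableSet_Ioo hq.monotoneOn).prodMk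
    (aemeasurable_restrict_of_antitoneOn measurableSet_Ioo fun t ht t' ht' htt' => ?_)
  exact hr.monotoneOn (show 1 - t' ∈ Ioo 0 1 from ⟨by linarith [ht'.2], by linarith [ht'.1]⟩)
    (show 1 - t ∈ Ioo 0 1 from ⟨by linarith [ht.2], by linarith [ht.1]⟩) (by linarith)

lemma isProbabilityMeasure_counterCoupling (hq : IsQuantileFun μ q) (hr : IsQuantileFun ν r) :
    IsProbabilityMeasure (counterCoupling q r) :=
  Measure.isProbabilityMeasure_map (aemeasurable_counterCoupling hq hr)

lemma counterCoupling_map_fst [IsProbabilityMeasure μ] (hq : IsQuantileFun μ q)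
    (hr : IsQuantileFun ν r) : (counterCoupling q r).map Prod.fst = μ := by
  rw [counterCoupling, AEMeasurable.map_map_of_aemeasurable measurable_fst.aemeasurable
    (aemeasurable_counterCoupling hq hr)]
  exact hq.map_restrict_Ioo

lemma counterCoupling_map_snd [IsProbabilityMeasure ν] (hq : IsQuantileFun μ q)
    (hr : IsQuantileFun ν r) : (counterCoupling q r).map Prod.snd = ν := by
  have hrm : AEMeasurable r ((volume.restrict (Ioo (0 : ℝ) 1)).map fun t => 1 - t) := by
    rw [map_one_sub_restrict_Ioo]
    exact aemeasurable_restrict_of_monotoneOn measurableSet_Ioo hr.monotoneOn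
  rw [counterCoupling, AEMeasurable.map_map_of_aemeasurable measurable_snd.aemeasurable
    (aemeasurable_counterCoupling hq hr)]
  calc _ = ((volume.restrict (Ioo (0 : ℝ) 1)).map fun t => 1 - t).map r :=
        (AEMeasurable.map_map_of_aemeasurable hrm (by fun_prop)).symm
    _ = ν := by rw [map_one_sub_restrict_Ioo, hr.map_restrict_Ioo]

lemma counterCoupling_real_orthant (hq : IsQuantileFun μ q) (hr : IsQuantileFun ν r) (a b : ℝ) :
    (counterCoupling q r).real (Ioi a ×ˢ Ioi b) = max (1 - cdf μ a - cdf ν b) 0 := by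
  have hset : (fun t => (q t, r (1 - t))) ⁻¹' (Ioi a ×ˢ Ioi b) ∩ Ioo 0 1 =
      Ioo (cdf μ a) (1 - cdf ν b) := by
    ext t
    simp only [mem_inter_iff, mem_preimage, mem_prod, mem_Ioi, mem_Ioo]
    constructor
    · rintro ⟨⟨ha, hb⟩, ht⟩
      rw [hq.lt_iff ht] at ha
      rw [hr.lt_iff ⟨by linarith [ht.2], by linarith [ht.1]⟩] at hb
      exact ⟨ha, by linarith⟩
    · rintro ⟨ha, hb⟩
      have ht : 0 < t ∧ t < 1 := ⟨(cdf_nonneg μ a).trans_lt ha, by linarith [cdf_nonneg ν b]⟩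
      rw [hq.lt_iff ht, hr.lt_iff ⟨by linarith [ht.2], by linarith [ht.1]⟩]
      exact ⟨⟨ha, by linarith⟩, ht⟩
  rw [counterCoupling, map_measureReal_apply_of_aemeasurable (aemeasurable_counterCoupling hq hr)
    (measurableSet_Ioi.prod measurableSet_Ioi), measureReal_def,
    Measure.restrict_apply' measurableSet_Ioo, hset, Real.volume_Ioo, ENNReal.toReal_ofReal',
    sub_right_comm]

/-- The Fréchet–Hoeffding lower bound. -/
lemma one_sub_cdf_sub_cdf_le_measureReal_orthant (γ : Measure (ℝ × ℝ)) [IsProbabilityMeasure γ]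
    (a b : ℝ) : 1 - cdf (γ.map Prod.fst) a - cdf (γ.map Prod.snd) b ≤ γ.real (Ioi a ×ˢ Ioi b) := by
  have : IsProbabilityMeasure (γ.map Prod.fst) := Measure.isProbabilityMeasure_map (by fun_prop)
  have : IsProbabilityMeasure (γ.map Prod.snd) := Measure.isProbabilityMeasure_map (by fun_prop)
  have hcompl : (Ioi a ×ˢ Ioi b)ᶜ = Prod.fst ⁻¹' Iic a ∪ Prod.snd ⁻¹' Iic b := by
    ext p
    simp only [mem_compl_iff, mem_prod, mem_Ioi, mem_union, mem_preimage, mem_Iic, not_and_or,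
      not_lt]
  have := measureReal_union_le (μ := γ) (Prod.fst ⁻¹' Iic a) (Prod.snd ⁻¹' Iic b)
  rw [← hcompl, measureReal_compl (measurableSet_Ioi.prod measurableSet_Ioi), probReal_univ] at this
  rw [cdf_eq_real, cdf_eq_real, map_measureReal_apply measurable_fst measurableSet_Iic,
    map_measureReal_apply measurable_snd measurableSet_Iic]
  linarith

theorem IsSupermodular.integral_counterCoupling_le (hs : IsSupermodular s)
    (hsm : Measurable (fun p : ℝ × ℝ => s p.1 p.2)) (hM : ∀ x y, |s x y| ≤ M)
    (γ : Measure (ℝ × ℝ)) [IsProbabilityMeasure γ]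
    (hcont₁ : Continuous (cdf (γ.map Prod.fst))) (hcont₂ : Continuous (cdf (γ.map Prod.snd)))
    (hq : IsQuantileFun (γ.map Prod.fst) q) (hr : IsQuantileFun (γ.map Prod.snd) r) :
    ∫ p, s p.1 p.2 ∂counterCoupling q r ≤ ∫ p, s p.1 p.2 ∂γ := by
  have : IsProbabilityMeasure (γ.map Prod.fst) := Measure.isProbabilityMeasure_map (by fun_prop)
  have : IsProbabilityMeasure (γ.map Prod.snd) := Measure.isProbabilityMeasure_map (by fun_prop)
  have := isProbabilityMeasure_counterCoupling hq hr
  refine hs.integral_le_of_orthant_le hsm hM (counterCoupling_map_fst hq hr)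
    (counterCoupling_map_snd hq hr) hcont₁ hcont₂ fun a b => ?_
  rw [counterCoupling_real_orthant hq hr]
  exact max_le (one_sub_cdf_sub_cdf_le_measureReal_orthant γ a b) measureReal_nonneg

lemma integral_comp_counterCoupling {Ω : Type*} [MeasurableSpace Ω] {Q : Measure Ω}
    {U : Ω → ℝ} (hUm : Measurable U) (hU : Q.map U = volume.restrict (Icc 0 1))
    (hq : IsQuantileFun μ q) (hr : IsQuantileFun ν r) {f : ℝ × ℝ → ℝ} (hf : Measurable f) :
    ∫ ω, f (q (U ω), r (1 - U ω)) ∂Q = ∫ p, f p ∂counterCoupling q r := by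
  have hU' : Q.map U = volume.restrict (Ioo 0 1) :=
    hU.trans (Measure.restrict_congr_set Ioo_ae_eq_Icc).symm
  have hg := aemeasurable_counterCoupling hq hr
  rw [counterCoupling, integral_map hg hf.aestronglyMeasurable, ← hU',
    integral_map hUm.aemeasurable
      (by rw [hU']; exact (hf.comp_aemeasurable hg).aestronglyMeasurable)]

end Countermonotone

theorem supermodular_countermonotone_min_general {Ω Ω' : Type*} [MeasurableSpace Ω] [MeasurableSpace Ω']
    (P : Measure Ω) [IsProbabilityMeasure P] (Q : Measure Ω')
    (s : ℝ → ℝ → ℝ)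
    (hsm : Measurable (fun p : ℝ × ℝ => s p.1 p.2))
    (hsb : ∃ M : ℝ, ∀ x y : ℝ, |s x y| ≤ M)
    (hsuper : ∀ x₁ x₂ y₁ y₂ : ℝ, x₁ ≤ x₂ → y₁ ≤ y₂ →
      s x₁ y₂ + s x₂ y₁ ≤ s x₁ y₁ + s x₂ y₂)
    (X Y : Ω → ℝ) (hXm : Measurable X) (hYm : Measurable Y)
    (F G : ℝ → ℝ) (hFc : Continuous F) (hFs : StrictMono F)
    (hGc : Continuous G) (hGs : StrictMono G)
    (hF : ∀ x, F x = (P.map X (Iic x)).toReal)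
    (hG : ∀ y, G y = (P.map Y (Iic y)).toReal)
    (U : Ω' → ℝ) (hUm : Measurable U)
    (hU : Measure.map U Q = volume.restrict (Icc (0:ℝ) 1)) :
    ∫ ω', s (Function.invFun F (U ω')) (Function.invFun G (1 - U ω')) ∂Q ≤
      ∫ ω, s (X ω) (Y ω) ∂P := by
  obtain ⟨M, hM⟩ := hsb
  have hXY : Measurable fun ω => (X ω, Y ω) := hXm.prodMk hYm
  set γ := P.map fun ω => (X ω, Y ω)
  have : IsProbabilityMeasure γ := Measure.isProbabilityMeasure_map hXY.aemeasurable
  have : IsProbabilityMeasure (P.map X) := Measure.isProbabilityMeasure_map hXm.aemeasurable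
  have : IsProbabilityMeasure (P.map Y) := Measure.isProbabilityMeasure_map hYm.aemeasurable
  have hfst : γ.map Prod.fst = P.map X := Measure.map_map measurable_fst hXY
  have hsnd : γ.map Prod.snd = P.map Y := Measure.map_map measurable_snd hXY
  have hcdfX : ⇑(cdf (γ.map Prod.fst)) = F := funext fun x => by
    rw [hfst, cdf_eq_real, hF, measureReal_def]
  have hcdfY : ⇑(cdf (γ.map Prod.snd)) = G := funext fun y => by
    rw [hsnd, cdf_eq_real, hG, measureReal_def]
  have hq := isQuantileFun_invFun_cdf (hcdfX ▸ hFc) (hcdfX ▸ hFs)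
  have hr := isQuantileFun_invFun_cdf (hcdfY ▸ hGc) (hcdfY ▸ hGs)
  rw [hcdfX] at hq
  rw [hcdfY] at hr
  rw [integral_comp_counterCoupling hUm hU hq hr hsm,
    ← integral_map hXY.aemeasurable hsm.aestronglyMeasurable]
  exact IsSupermodular.integral_counterCoupling_le hsuper hsm hM γ (hcdfX ▸ hFc) (hcdfY ▸ hGc)
    hq hr

/-- The countermonotonic coupling minimizes the expectation of a bounded measurable
supermodular function over all couplings with fixed margins (Puccetti–Scarsini,
Theorem 3.1): E[s(X,Y)] ≥ E[s(F⁻¹(U), G⁻¹(1−U))] for U uniform on [0,1]. -/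
theorem supermodular_countermonotone_min {Ω Ω' : Type*} [MeasurableSpace Ω] [MeasurableSpace Ω']
    (P : Measure Ω) [IsProbabilityMeasure P] (Q : Measure Ω') [IsProbabilityMeasure Q]
    (s : ℝ → ℝ → ℝ)
    (hsm : Measurable (fun p : ℝ × ℝ => s p.1 p.2))
    (hsb : ∃ M : ℝ, ∀ x y : ℝ, |s x y| ≤ M)
    (hsuper : ∀ x₁ x₂ y₁ y₂ : ℝ, x₁ ≤ x₂ → y₁ ≤ y₂ →
      s x₁ y₂ + s x₂ y₁ ≤ s x₁ y₁ + s x₂ y₂)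
    (X Y : Ω → ℝ) (hXm : Measurable X) (hYm : Measurable Y)
    (F G : ℝ → ℝ) (hFc : Continuous F) (hFs : StrictMono F)
    (hGc : Continuous G) (hGs : StrictMono G)
    (hF : ∀ x, F x = (P.map X (Iic x)).toReal)
    (hG : ∀ y, G y = (P.map Y (Iic y)).toReal)
    (U : Ω' → ℝ) (hUm : Measurable U)
    (hU : Measure.map U Q = volume.restrict (Icc (0:ℝ) 1)) :
    ∫ ω', s (Function.invFun F (U ω')) (Function.invFun G (1 - U ω')) ∂Q ≤
      ∫ ω, s (X ω) (Y ω) ∂P :=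
  supermodular_countermonotone_min_general P Q s hsm hsb hsuper X Y hXm hYm F G hFc hFs hGc hGs hF
    hG U hUm hU
end
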